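/- arXiv:2207.04872 — 2 statements merged into one kernel-verified Lean document; each statement's English description precedes it below -/
import Mathlib

section
/- Let G be a simple graph and let X be a finite set of vertices with |X| = k such that the induced subgraph G − X is a disjoint union of cliques, i.e., any two distinct vertices of G − X that lie in the same connected component of G − X are adjacent. Then for any two vertices u and v of G that are joined by a walk, dist(u, v) ≤ 3k + 1. -/
/-!
Take a shortest walk `v₀ v₁ … v_L` from `u` to `v`; it has no repeated vertices and no chords.
If `v_i, v_{i+1}, v_{i+2}` all avoided `X`, then `v_i` and `v_{i+2}` would be distinct vertices
of one component of `G - X`, hence adjacent: a chord. So each of the disjoint windows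
`{3j, 3j+1, 3j+2}` contains an index of a vertex of `X`, and if `L ≥ 3k + 2` there are `k + 1`
such windows, giving `k + 1` distinct vertices of `X`.
-/

namespace SimpleGraph.Walk

variable {V : Type*} {G : SimpleGraph V} {u v : V}

lemma not_adj_getVert_of_length_eq_dist (p : G.Walk u v) (hp : p.length = G.dist u v)
    {i j : ℕ} (hij : i + 2 ≤ j) (hj : j ≤ p.length) :
    ¬ G.Adj (p.getVert i) (p.getVert j) := by
  intro hadj
  have hshort := dist_le ((p.take i).append (cons hadj (p.drop j)))
  simp only [length_append, take_length, length_cons, drop_length] at hshort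
  omega

lemma exists_getVert_notMem_of_length_eq_dist {s : Set V}
    (hs : ∀ x y : s, x ≠ y → (G.induce s).Reachable x y → (G.induce s).Adj x y)
    (p : G.Walk u v) (hp : p.length = G.dist u v) {j : ℕ} (hj : j + 2 ≤ p.length) :
    ∃ i, j ≤ i ∧ i < j + 3 ∧ p.getVert i ∉ s := by
  by_contra! hall
  have h₀ := hall j le_rfl (by omega)
  have h₁ := hall (j + 1) (by omega) (by omega)
  have h₂ := hall (j + 2) (by omega) (by omega)
  have hne : p.getVert j ≠ p.getVert (j + 2) := fun h ↦ by
    have := (p.isPath_of_length_eq_dist hp).getVert_injOn (show j ≤ p.length by omega) (show j + 2 ≤ p.length from hj) h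
    omega
  have hreach : (G.induce s).Reachable ⟨_, h₀⟩ ⟨_, h₂⟩ :=
    (show (G.induce s).Adj ⟨_, h₀⟩ ⟨_, h₁⟩ from p.adj_getVert_succ (by omega)).reachable.trans
      (show (G.induce s).Adj ⟨_, h₁⟩ ⟨_, h₂⟩ from p.adj_getVert_succ (by omega)).reachable
  exact p.not_adj_getVert_of_length_eq_dist hp le_rfl hj
    (hs _ _ (fun h ↦ hne (congrArg Subtype.val h)) hreach)

end SimpleGraph.Walk

lemma le_card_of_forall_window {α : Type*} (f : ℕ → α) (X : Finset α) {d n : ℕ}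
    (hf : Set.InjOn f (Set.Iio (d * n)))
    (hX : ∀ j < n, ∃ i, d * j ≤ i ∧ i < d * j + d ∧ f i ∈ X) :
    n ≤ X.card := by
  choose! g hg_ge hg_lt hgX using hX
  have hg_lt_of_lt {j j' : ℕ} (hj : j < n) (hjj' : j < j') : g j < d * j' :=
    (hg_lt j hj).trans_le (by nlinarith)
  have hg_inj : Set.InjOn g (Set.Iio n) := fun j₁ hj₁ j₂ hj₂ h ↦ by
    by_contra hne
    rcases Nat.lt_or_gt_of_ne hne with hlt | hlt
    · exact (hg_lt_of_lt hj₁ hlt).not_ge (h ▸ hg_ge j₂ hj₂)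
    · exact (hg_lt_of_lt hj₂ hlt).not_ge (h ▸ hg_ge j₁ hj₁)
  have hfg_inj : Set.InjOn (f ∘ g) (Finset.range n) := fun j₁ hj₁ j₂ hj₂ h ↦ by
    simp only [Finset.coe_range] at hj₁ hj₂
    exact hg_inj hj₁ hj₂ (hf (hg_lt_of_lt hj₁ hj₁) (hg_lt_of_lt hj₂ hj₂) h)
  simpa using Finset.card_le_card_of_injOn (f ∘ g)
    (fun j hj ↦ hgX j (Finset.mem_range.mp hj)) hfg_inj

/-- If `X` is a set of `k` vertices such that `G - X` is a disjoint union of cliques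
(any two distinct vertices of `G - X` in the same component of `G - X` are adjacent),
then any two vertices of `G` joined by a walk are at distance at most `3 * k + 1`. -/
theorem stmt_2 {V : Type*} (G : SimpleGraph V) (k : ℕ) (X : Finset V)
    (hcard : X.card = k)
    (hcliques : ∀ u v : ((↑X : Set V)ᶜ : Set V), u ≠ v →
      (G.induce ((↑X : Set V)ᶜ)).Reachable u v → (G.induce ((↑X : Set V)ᶜ)).Adj u v)
    (u v : V) (h : G.Reachable u v) :
    G.dist u v ≤ 3 * k + 1 := by
  by_contra! hlong
  obtain ⟨p, hp⟩ := h.exists_walk_length_eq_dist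
  have hinj : Set.InjOn p.getVert (Set.Iio (3 * (k + 1))) :=
    (p.isPath_of_length_eq_dist hp).getVert_injOn.mono fun i (hi : i < _) ↦
      show i ≤ p.length by omega
  have hwindow : ∀ j < k + 1, ∃ i, 3 * j ≤ i ∧ i < 3 * j + 3 ∧ p.getVert i ∈ X := fun j hj ↦ by
    simpa using p.exists_getVert_notMem_of_length_eq_dist hcliques hp (j := 3 * j) (by omega)
  have := le_card_of_forall_window p.getVert X hinj hwindow
  omega
end

section
/- Let n ≥ 1 and let x, y : {1,…,n} → {0,1} be such that neither x nor y is identically zero. In the graph SVA(x,y): if there exists an index i with x_i = y_i = 1, then every two vertices are at distance at most 3; if there is no such index, then dist(a, b) = 4. -/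
/-- Vertices of the `Simple VA` construction: `a`, `b`, `c` and `v i` for `i` in
`{1, …, n}` (encoded as `Fin n`). -/
inductive SVAVert (n : ℕ) : Type
  | a : SVAVert n
  | b : SVAVert n
  | c : SVAVert n
  | v : Fin n → SVAVert n

/-- Edges of `SVA(x, y)`: `c ~ v i` always, `a ~ v i` iff `x i = 1`,
`b ~ v i` iff `y i = 1`, and no other edges. -/
def svaRel {n : ℕ} (x y : Fin n → Fin 2) : SVAVert n → SVAVert n → Prop
  | .c, .v _ => True
  | .a, .v i => x i = 1
  | .b, .v i => y i = 1
  | _, _ => False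

/-- The `Simple VA` graph. -/
def SVA {n : ℕ} (x y : Fin n → Fin 2) : SimpleGraph (SVAVert n) :=
  SimpleGraph.fromRel (svaRel x y)

/-! If `x i = y i = 1`, the edge `c v_i` dominates `SVA(x, y)`: `a`, `b` and `c` are within one
step of `v_i` and every `v_j` is adjacent to `c`, so any two vertices are joined through that edge
by at most three edges. Otherwise `a v_i c v_j b` is a path of length 4, and nothing shorter exists
because the potential `0, 1, 2, 3, 4` on `a`, the neighbours of `a`, `c`, the other `v_j`, `b`
grows by at most one along each edge: `b` only sees vertices `v_j` with `x j = 0`. -/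

namespace SimpleGraph

variable {V : Type*} {G : SimpleGraph V}

theorem dist_le_two_of_adj_of_adj {u v w : V} (huv : G.Adj u v) (hvw : G.Adj v w) :
    G.dist u w ≤ 2 :=
  G.dist_le (.cons huv (.cons hvw .nil))

theorem Connected.dist_le_three_of_dominating_adj (hG : G.Connected) {s t : V} (hst : G.Adj s t)
    (hdom : ∀ u, G.dist u s ≤ 1 ∨ G.dist u t ≤ 1) (u w : V) : G.dist u w ≤ 3 := by
  have hst' : G.dist s t = 1 := dist_eq_one_iff_adj.mpr hst
  have hts' : G.dist t s = 1 := dist_eq_one_iff_adj.mpr hst.symm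
  have hdist (p q : V) : G.dist u w ≤ G.dist u p + G.dist p q + G.dist q w :=
    (hG.dist_triangle (v := q)).trans (by grw [hG.dist_triangle (u := u) (v := p) (w := q)])
  rcases hdom u with hu | hu <;> rcases hdom w with hw | hw <;> rw [dist_comm (u := w)] at hw
  · grw [hdist s s, hu, hw, dist_self]; norm_num
  · grw [hdist s t, hu, hw, hst']
  · grw [hdist t s, hu, hw, hts']
  · grw [hdist t t, hu, hw, dist_self]; norm_num

theorem Walk.apply_le_apply_add_length {f : V → ℕ}
    (hf : ∀ ⦃u w⦄, G.Adj u w → f w ≤ f u + 1) {u w : V}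
    (p : G.Walk u w) : f w ≤ f u + p.length := by
  induction p with
  | nil => simp
  | cons h p ih => have := hf h; rw [Walk.length_cons]; omega

theorem Reachable.apply_le_apply_add_dist {f : V → ℕ}
    (hf : ∀ ⦃u w⦄, G.Adj u w → f w ≤ f u + 1) {u w : V}
    (h : G.Reachable u w) : f w ≤ f u + G.dist u w := by
  obtain ⟨p, hp⟩ := h.exists_walk_length_eq_dist
  exact hp ▸ p.apply_le_apply_add_length hf

end SimpleGraph

namespace SVA

open SVAVert SimpleGraph

variable {n : ℕ} {x y : Fin n → Fin 2}

theorem adj_c_v (i : Fin n) : (SVA x y).Adj c (v i) :=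
  ⟨nofun, Or.inl trivial⟩

theorem adj_a_v {i : Fin n} (hi : x i = 1) : (SVA x y).Adj a (v i) :=
  ⟨nofun, Or.inl hi⟩

theorem adj_b_v {i : Fin n} (hi : y i = 1) : (SVA x y).Adj b (v i) :=
  ⟨nofun, Or.inl hi⟩

theorem connected (hx : ∃ i, x i = 1) (hy : ∃ i, y i = 1) : (SVA x y).Connected := by
  obtain ⟨i, hi⟩ := hx
  obtain ⟨j, hj⟩ := hy
  refine (connected_iff_exists_forall_reachable _).2 ⟨c, ?_⟩
  rintro (_ | _ | _ | k)
  · exact (adj_c_v i).reachable.trans (adj_a_v hi).symm.reachable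
  · exact (adj_c_v j).reachable.trans (adj_b_v hj).symm.reachable
  · rfl
  · exact (adj_c_v k).reachable

theorem dist_c_le_one_or_dist_v_le_one {i : Fin n} (hxi : x i = 1) (hyi : y i = 1)
    (u : SVAVert n) : (SVA x y).dist u c ≤ 1 ∨ (SVA x y).dist u (v i) ≤ 1 := by
  cases u with
  | a => exact .inr (dist_eq_one_iff_adj.mpr (adj_a_v hxi)).le
  | b => exact .inr (dist_eq_one_iff_adj.mpr (adj_b_v hyi)).le
  | c => simp
  | v j => exact .inl (dist_eq_one_iff_adj.mpr (adj_c_v j).symm).le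

def abPotential (x : Fin n → Fin 2) : SVAVert n → ℕ
  | a => 0
  | v i => if x i = 1 then 1 else 3
  | c => 2
  | b => 4

theorem abPotential_le_of_adj (hxy : ¬∃ i, x i = 1 ∧ y i = 1) ⦃u w : SVAVert n⦄
    (huw : (SVA x y).Adj u w) : abPotential x w ≤ abPotential x u + 1 := by
  cases u <;> cases w <;> grind [SVA, svaRel, abPotential, fromRel_adj]

end SVA

open SVA SVAVert SimpleGraph in
theorem stmt_4_general {n : ℕ} (x y : Fin n → Fin 2)
    (hx : ∃ i, x i = 1) (hy : ∃ i, y i = 1) :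
    ((∃ i, x i = 1 ∧ y i = 1) → ∀ u w : SVAVert n, (SVA x y).dist u w ≤ 3) ∧
    ((¬ ∃ i, x i = 1 ∧ y i = 1) → (SVA x y).dist SVAVert.a SVAVert.b = 4) := by
  have hG := SVA.connected hx hy
  refine ⟨fun ⟨i, hxi, hyi⟩ ↦ hG.dist_le_three_of_dominating_adj (adj_c_v i)
    (dist_c_le_one_or_dist_v_le_one hxi hyi), fun hxy ↦ ?_⟩
  obtain ⟨i, hxi⟩ := hx
  obtain ⟨j, hyj⟩ := hy
  have hupper : (SVA x y).dist a b ≤ 4 :=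
    calc (SVA x y).dist a b ≤ (SVA x y).dist a c + (SVA x y).dist c b := hG.dist_triangle
      _ ≤ 2 + 2 := add_le_add (dist_le_two_of_adj_of_adj (adj_a_v hxi) (adj_c_v i).symm)
          (dist_le_two_of_adj_of_adj (adj_c_v j) (adj_b_v hyj).symm)
  have hlower := (hG a b).apply_le_apply_add_dist (abPotential_le_of_adj hxy)
  simp only [abPotential] at hlower
  omega

theorem stmt_4 {n : ℕ} (hn : 1 ≤ n) (x y : Fin n → Fin 2)
    (hx : ∃ i, x i = 1) (hy : ∃ i, y i = 1) :
    ((∃ i, x i = 1 ∧ y i = 1) → ∀ u w : SVAVert n, (SVA x y).dist u w ≤ 3) ∧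
    ((¬ ∃ i, x i = 1 ∧ y i = 1) → (SVA x y).dist SVAVert.a SVAVert.b = 4) :=
  stmt_4_general x y hx hy
end
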